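/- Let D be an oriented link diagram, let R be the Seifert circle through a fixed appropriate point, let M be the set of coherent sequences of Seifert circles starting at R, let [M] be the set of Seifert circles covered by such sequences, and for C ∈ [M] let α(C) be the distance from C to R in the Seifert graph of D. Assign to each pair {C₁, C₂} of consecutive Seifert circles from [M] the number min(α(C₁), α(C₂)) · Cr(C₁, C₂), where Cr(C₁, C₂) is the number of crossings shared by C₁ and C₂. Then each application of an Artin move of the prescribed direction to a triple of consecutive Seifert circles from [M] decreases the total sum of these assigned numbers by exactly one; consequently the process of applying all such Artin moves terminates. -/
import Mathlib


open scoped Classical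

/-!
**Claim (Step 2 of the proof of Lemma 4.2)**, in the abstract combinatorial setting.

`Diagram` is the type of the oriented link diagrams occurring during the Artin-move
normalization process, `Circle` is the (common, finite) set of Seifert circles of these
diagrams, `R` is the Seifert circle through the fixed appropriate point, `Consec D e`
states that the unordered pair `e` of Seifert circles is a pair of consecutive circles
of a coherent sequence starting at `R` (i.e. both circles belong to `[M]` and are
consecutive in such a sequence), `crB D e` is the number of crossings of `D` shared by
the pair `e`, and `α C` is the distance from `C` to `R` in the Seifert graph of the
diagram. `Step D D'` states that `D'` is obtained from `D` by an Artin move of the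
prescribed direction applied to a triple `(C₁, C₂, C₃)` of consecutive Seifert circles
from `[M]`: such a move increases `Cr(C₁, C₂)` by one, decreases `Cr(C₂, C₃)` by one,
changes no other quantities, and satisfies `α(C₃) = α(C₂) + 1 = α(C₁) + 2`.
-/

/-- The number `min (α C₁) (α C₂)` as a function of the unordered pair `{C₁, C₂}`. -/
def pairMin {Circle : Type} (α : Circle → ℕ) : Sym2 Circle → ℕ :=
  Sym2.lift ⟨fun C₁ C₂ => min (α C₁) (α C₂), fun _ _ => min_comm _ _⟩

/-- The total sum, over all pairs `{C₁, C₂}` of consecutive Seifert circles from `[M]`,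
of the assigned numbers `min (α C₁, α C₂) · Cr(C₁, C₂)`. -/
noncomputable def artinPotential {Diagram Circle : Type} [Fintype Circle] [DecidableEq Circle]
    (crB : Diagram → Sym2 Circle → ℕ) (Consec : Diagram → Sym2 Circle → Prop)
    (α : Circle → ℕ) (D : Diagram) : ℕ :=
  ∑ e : Sym2 Circle, if Consec D e then pairMin α e * crB D e else 0

/-- **Claim (Step 2 of the proof of Lemma 4.2).** Each application of an Artin move of
the prescribed direction to a triple of consecutive Seifert circles from `[M]` decreases
by exactly one the total sum, over pairs `{C₁, C₂}` of consecutive Seifert circles from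
`[M]`, of the assigned numbers `min (α C₁, α C₂) · Cr(C₁, C₂)`; consequently the process
of applying all such Artin moves terminates (there is no infinite sequence of such
moves). -/
theorem artin_normalization_terminates (Diagram Circle : Type)
    [Fintype Circle] [DecidableEq Circle]
    (crB : Diagram → Sym2 Circle → ℕ) (Consec : Diagram → Sym2 Circle → Prop)
    (α : Circle → ℕ) (Step : Diagram → Diagram → Prop)
    (hStep : ∀ D D', Step D D' → ∃ C₁ C₂ C₃ : Circle,
        C₁ ≠ C₂ ∧ C₂ ≠ C₃ ∧ C₁ ≠ C₃ ∧
        Consec D s(C₁, C₂) ∧ Consec D s(C₂, C₃) ∧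
        α C₂ = α C₁ + 1 ∧ α C₃ = α C₂ + 1 ∧
        crB D' s(C₁, C₂) = crB D s(C₁, C₂) + 1 ∧
        crB D s(C₂, C₃) = crB D' s(C₂, C₃) + 1 ∧
        (∀ e : Sym2 Circle, e ≠ s(C₁, C₂) → e ≠ s(C₂, C₃) → crB D' e = crB D e) ∧
        (∀ e : Sym2 Circle, Consec D' e ↔ Consec D e)) :
    (∀ D D', Step D D' →
        artinPotential crB Consec α D' + 1 = artinPotential crB Consec α D) ∧
    (∀ f : ℕ → Diagram, ¬ ∀ n : ℕ, Step (f n) (f (n + 1))) := by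
  have key : ∀ D D', Step D D' →
      artinPotential crB Consec α D' + 1 = artinPotential crB Consec α D := by
    intro D D' hDD'
    obtain ⟨C₁, C₂, C₃, h12, h23, h13, hc12, hc23, hα2, hα3, hcr12, hcr23, hother, hcons⟩ :=
      hStep D D' hDD'
    set A : Sym2 Circle := s(C₁, C₂) with hA
    set B : Sym2 Circle := s(C₂, C₃) with hB
    have hAB : A ≠ B := by
      intro h
      rw [hA, hB, Sym2.eq_iff] at h
      rcases h with ⟨h1, _⟩ | ⟨h1, h2⟩
      · exact h12 h1
      · exact h13 h1
    have hpA : pairMin α A = α C₁ := by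
      simp [hA, pairMin, hα2]
    have hpB : pairMin α B = α C₁ + 1 := by
      simp [hB, pairMin, hα3, hα2]
    -- rewrite both potentials using Consec D
    have hrw : ∀ E : Diagram, (∀ e : Sym2 Circle, Consec E e ↔ Consec D e) →
        artinPotential crB Consec α E
        = ∑ e : Sym2 Circle, if Consec D e then pairMin α e * crB E e else 0 := by
      intro E hE
      unfold artinPotential
      exact Finset.sum_congr rfl fun e _ => by simp [hE e]
    have hD' : artinPotential crB Consec α D'
        = ∑ e : Sym2 Circle, if Consec D e then pairMin α e * crB D' e else 0 :=
      hrw D' hcons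
    have hD : artinPotential crB Consec α D
        = ∑ e : Sym2 Circle, if Consec D e then pairMin α e * crB D e else 0 := rfl
    rw [hD', hD]
    have hmemA : A ∈ (Finset.univ : Finset (Sym2 Circle)) := Finset.mem_univ _
    have hmemB : B ∈ (Finset.univ : Finset (Sym2 Circle)).erase A :=
      Finset.mem_erase.mpr ⟨hAB.symm, Finset.mem_univ _⟩
    have split : ∀ g : Sym2 Circle → ℕ,
        ∑ e : Sym2 Circle, g e
        = g A + (g B + ∑ e ∈ ((Finset.univ.erase A).erase B), g e) := by
      intro g
      rw [← Finset.add_sum_erase _ g hmemA, ← Finset.add_sum_erase _ g hmemB]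
    rw [split fun e => if Consec D e then pairMin α e * crB D' e else 0,
        split fun e => if Consec D e then pairMin α e * crB D e else 0]
    have hrest : ∑ e ∈ ((Finset.univ.erase A).erase B),
          (if Consec D e then pairMin α e * crB D' e else 0)
        = ∑ e ∈ ((Finset.univ.erase A).erase B),
          (if Consec D e then pairMin α e * crB D e else 0) := by
      refine Finset.sum_congr rfl fun e he => ?_
      have heB := (Finset.mem_erase.mp he).1
      have heA := (Finset.mem_erase.mp (Finset.mem_erase.mp he).2).1
      rw [hother e heA heB]
    rw [hrest]
    simp only [if_pos hc12, if_pos hc23, hpA, hpB, hcr12, hcr23]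
    ring
  refine ⟨key, ?_⟩
  intro f hf
  have hle : ∀ n : ℕ, artinPotential crB Consec α (f n) + n
      ≤ artinPotential crB Consec α (f 0) := by
    intro n
    induction n with
    | zero => simp
    | succ k ih =>
      have := key (f k) (f (k + 1)) (hf k)
      omega
  have := hle (artinPotential crB Consec α (f 0) + 1)
  omega
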